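/- arXiv:1510.08165 — 2 statements merged into one kernel-verified Lean document; each statement's English description precedes it below -/
import Mathlib

section
/- Let H be a real Hilbert space and C a nonempty closed convex subset of H. Let T : C → C be an asymptotically quasi-nonexpansive mapping with sequence {k_n} ⊂ [1,∞), k_n → 1, which is uniformly L-Lipschitz, and suppose F(T) is nonempty and bounded, say F(T) ⊆ {u ∈ C : ‖u‖ ≤ ω} for some ω > 0. Let {α_n} ⊂ [0,1] with α_n → 0, and set ε_n = (k_n − 1)(ω + ‖x_n‖)². Let {x_n} be generated by: x_0 ∈ C, C_0 = C; y_n = α_n x_n + (1 − α_n) T^n x_n; C_{n+1} = {v ∈ C_n : ‖v − y_n‖² ≤ ‖v − x_n‖² + ε_n}; and x_{n+1} is the metric projection of x_0 onto C_{n+1}. Then {x_n} converges strongly to the metric projection of x_0 onto F(T). -/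
/-!
Each set `CS n` is convex (an intersection of half-spaces) and contains `F(T)`, because the
asymptotic quasi-nonexpansiveness of `T` makes every fixed point satisfy the defining inequality.
Since the sets decrease, `‖x n - x 0‖` increases and is bounded by the distance from `x 0` to a
fixed point; the parallelogram law at the midpoint of `x n` and `x m` then bounds `‖x m - x n‖²`
by twice the increment of `‖x · - x 0‖²`, so `x` is Cauchy with some limit `z`. Membership of
`x (n + 1)` in `CS (n + 1)` forces `‖x n - y n‖ → 0`, hence `‖x n - Tⁿ x n‖ → 0`, and the uniform
Lipschitz bound turns this into `‖x n - T x n‖ → 0`, so `z` is a fixed point. As `x n` is nearest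
to `x 0` in a set containing `F(T)`, so is the limit `z`.
-/

open Filter Topology

section Restriction

variable {α : Type*} {S : ℕ → Set α} {P : ℕ → α → Prop}

lemma antitone_of_succ_eq_sep (hS : ∀ n, S (n + 1) = {v ∈ S n | P n v}) : Antitone S :=
  antitone_nat_of_succ_le fun n => (hS n).symm ▸ Set.sep_subset _ _

lemma subset_of_succ_eq_sep (hS : ∀ n, S (n + 1) = {v ∈ S n | P n v}) {A : Set α}
    (h₀ : A ⊆ S 0) (hA : ∀ n, ∀ v ∈ A, P n v) (n : ℕ) : A ⊆ S n := by
  induction n with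
  | zero => exact h₀
  | succ n ih => rw [hS n]; exact fun v hv => ⟨ih hv, hA n v hv⟩

end Restriction

lemma convex_of_succ_eq_sep {E : Type*} [AddCommGroup E] [Module ℝ E] {S : ℕ → Set E}
    {P : ℕ → E → Prop} (hS : ∀ n, S (n + 1) = {v ∈ S n | P n v}) (h₀ : Convex ℝ (S 0))
    (hP : ∀ n, Convex ℝ {v | P n v}) (n : ℕ) : Convex ℝ (S n) := by
  induction n with
  | zero => exact h₀
  | succ n ih => rw [hS n]; exact ih.inter (hP n)

section Normed

variable {E : Type*} [SeminormedAddCommGroup E]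

def IsNearestPoint (S : Set E) (u w : E) : Prop :=
  w ∈ S ∧ ∀ v ∈ S, ‖w - u‖ ≤ ‖v - u‖

lemma IsNearestPoint.norm_sub_le_of_tendsto {S : ℕ → Set E} {u v z : E} {x : ℕ → E}
    (hx : ∀ n, IsNearestPoint (S n) u (x n)) (hz : Tendsto x atTop (𝓝 z)) (hv : ∀ n, v ∈ S n) :
    ‖z - u‖ ≤ ‖v - u‖ :=
  le_of_tendsto (hz.sub_const u).norm (Eventually.of_forall fun n => (hx n).2 v (hv n))

lemma tendsto_norm_sub_of_sq_le {a b c : ℕ → E} {e : ℕ → ℝ}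
    (hle : ∀ n, ‖a n - b n‖ ^ 2 ≤ ‖a n - c n‖ ^ 2 + e n)
    (hac : Tendsto (fun n => ‖a n - c n‖) atTop (𝓝 0)) (he : Tendsto e atTop (𝓝 0)) :
    Tendsto (fun n => ‖c n - b n‖) atTop (𝓝 0) := by
  have hab : Tendsto (fun n => ‖a n - b n‖) atTop (𝓝 0) := by
    have hsqrt : Tendsto (fun n => √(‖a n - c n‖ ^ 2 + e n)) atTop (𝓝 0) := by
      simpa using ((hac.pow 2).add he).sqrt
    refine squeeze_zero (fun n => norm_nonneg _) (fun n => ?_) hsqrt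
    simpa using Real.abs_le_sqrt (hle n)
  refine squeeze_zero (fun n => norm_nonneg _)
    (fun n => norm_sub_le_norm_sub_add_norm_sub _ (a n) _) ?_
  simpa [norm_sub_rev (c _)] using hac.add hab

lemma tendsto_norm_sub_of_convexComb [NormedSpace ℝ E] {x t : ℕ → E} {α : ℕ → ℝ}
    (hα : Tendsto α atTop (𝓝 0))
    (h : Tendsto (fun n => ‖x n - (α n • x n + (1 - α n) • t n)‖) atTop (𝓝 0)) :
    Tendsto (fun n => ‖x n - t n‖) atTop (𝓝 0) := by
  have hquot := h.div ((hα.const_sub 1).abs) (by norm_num)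
  rw [zero_div] at hquot
  refine hquot.congr' ?_
  filter_upwards [hα.eventually_ne (by norm_num : (0 : ℝ) ≠ 1)] with n hn
  have hsub : x n - (α n • x n + (1 - α n) • t n) = (1 - α n) • (x n - t n) := by module
  have : |1 - α n| ≠ 0 := abs_ne_zero.2 (sub_ne_zero.2 hn.symm)
  rw [Pi.div_apply, hsub, norm_smul, Real.norm_eq_abs, mul_div_cancel_left₀ _ this]

lemma norm_sub_convexComb_sq_le [NormedSpace ℝ E] {p u t : E} {a k ω : ℝ} (ha₀ : 0 ≤ a)
    (ha₁ : a ≤ 1) (hk : 1 ≤ k) (ht : ‖p - t‖ ^ 2 ≤ k * ‖p - u‖ ^ 2) (hp : ‖p‖ ≤ ω) :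
    ‖p - (a • u + (1 - a) • t)‖ ^ 2 ≤ ‖p - u‖ ^ 2 + (k - 1) * (ω + ‖u‖) ^ 2 := by
  have hconv : ‖a • (p - u) + (1 - a) • (p - t)‖ ^ 2
      ≤ a * ‖p - u‖ ^ 2 + (1 - a) * ‖p - t‖ ^ 2 := by
    simpa using (convexOn_univ_norm.pow (fun _ _ => norm_nonneg _) 2).2 (Set.mem_univ (p - u))
      (Set.mem_univ (p - t)) ha₀ (sub_nonneg.2 ha₁) (by ring)
  have hpu : ‖p - u‖ ^ 2 ≤ (ω + ‖u‖) ^ 2 :=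
    pow_le_pow_left₀ (norm_nonneg _) ((norm_sub_le p u).trans (by linarith)) 2
  have hsplit : p - (a • u + (1 - a) • t) = a • (p - u) + (1 - a) • (p - t) := by module
  rw [hsplit]
  nlinarith [mul_le_mul_of_nonneg_left ht (sub_nonneg.2 ha₁),
    mul_le_mul_of_nonneg_left hpu (mul_nonneg (sub_nonneg.2 ha₁) (sub_nonneg.2 hk)),
    mul_nonneg ha₀ (sub_nonneg.2 hk)]

lemma apply_eq_of_tendsto_norm_sub_apply [T2Space E] {C : Set E} {T : E → E} {L : ℝ}
    {x : ℕ → E} {z : E}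
    (hLip : ∀ u ∈ C, ∀ v ∈ C, ‖T u - T v‖ ≤ L * ‖u - v‖) (hxC : ∀ n, x n ∈ C) (hzC : z ∈ C)
    (hz : Tendsto x atTop (𝓝 z)) (hreg : Tendsto (fun n => ‖x n - T (x n)‖) atTop (𝓝 0)) :
    T z = z := by
  have hTz : Tendsto (fun n => T (x n)) atTop (𝓝 (T z)) := by
    refine tendsto_iff_norm_sub_tendsto_zero.2 (squeeze_zero (fun n => norm_nonneg _)
      (fun n => hLip _ (hxC n) _ hzC) ?_)
    simpa using (tendsto_iff_norm_sub_tendsto_zero.1 hz).const_mul L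
  have hTx : Tendsto (fun n => T (x n)) atTop (𝓝 z) := by
    simpa using hz.sub (tendsto_zero_iff_norm_tendsto_zero.2 hreg)
  exact tendsto_nhds_unique hTz hTx

lemma tendsto_norm_sub_apply_of_tendsto_norm_sub_iterate {C : Set E} {T : E → E} {L : ℝ}
    {x : ℕ → E} (hT : Set.MapsTo T C C)
    (hLip : ∀ n, 1 ≤ n → ∀ u ∈ C, ∀ v ∈ C, ‖T^[n] u - T^[n] v‖ ≤ L * ‖u - v‖)
    (hxC : ∀ n, x n ∈ C) (hiter : Tendsto (fun n => ‖x n - T^[n] (x n)‖) atTop (𝓝 0))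
    (hstep : Tendsto (fun n => ‖x (n + 1) - x n‖) atTop (𝓝 0)) :
    Tendsto (fun n => ‖x n - T (x n)‖) atTop (𝓝 0) := by
  have hstep₁ : Tendsto (fun n => ‖x (n + 2) - x (n + 1)‖) atTop (𝓝 0) :=
    hstep.comp (tendsto_add_atTop_nat 1)
  have hiter₁ : Tendsto (fun n => ‖x (n + 1) - T^[n + 1] (x (n + 1))‖) atTop (𝓝 0) :=
    hiter.comp (tendsto_add_atTop_nat 1)
  -- `T^[n+1]` moves `x (n+2)` little, since it moves `x (n+1)` little and is `L`-Lipschitz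
  have hlag : Tendsto (fun n => ‖T^[n + 1] (x (n + 2)) - x (n + 2)‖) atTop (𝓝 0) := by
    refine squeeze_zero (fun n => norm_nonneg _) (fun n => ?_)
      (by simpa using ((hstep₁.const_mul L).add hiter₁).add hstep₁)
    calc ‖T^[n + 1] (x (n + 2)) - x (n + 2)‖
        ≤ ‖T^[n + 1] (x (n + 2)) - T^[n + 1] (x (n + 1))‖
          + ‖T^[n + 1] (x (n + 1)) - x (n + 1)‖ + ‖x (n + 1) - x (n + 2)‖ :=
          (norm_sub_le_norm_sub_add_norm_sub _ (x (n + 1)) _).trans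
            (by gcongr; exact norm_sub_le_norm_sub_add_norm_sub _ _ _)
      _ ≤ L * ‖x (n + 2) - x (n + 1)‖ + ‖x (n + 1) - T^[n + 1] (x (n + 1))‖
          + ‖x (n + 2) - x (n + 1)‖ := by
          rw [norm_sub_rev (T^[n + 1] (x (n + 1))), norm_sub_rev (x (n + 1)) (x (n + 2))]
          gcongr
          exact hLip (n + 1) n.succ_pos' _ (hxC _) _ (hxC _)
  have hreg : Tendsto (fun n => ‖x (n + 2) - T (x (n + 2))‖) atTop (𝓝 0) := by
    refine squeeze_zero (fun n => norm_nonneg _) (fun n => ?_)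
      (by simpa using (hiter.comp (tendsto_add_atTop_nat 2)).add (hlag.const_mul L))
    calc ‖x (n + 2) - T (x (n + 2))‖
        ≤ ‖x (n + 2) - T^[n + 2] (x (n + 2))‖ + ‖T^[n + 2] (x (n + 2)) - T (x (n + 2))‖ :=
          norm_sub_le_norm_sub_add_norm_sub _ _ _
      _ ≤ ‖x (n + 2) - T^[n + 2] (x (n + 2))‖ + L * ‖T^[n + 1] (x (n + 2)) - x (n + 2)‖ := by
          rw [Function.iterate_succ_apply']
          gcongr
          simpa using hLip 1 le_rfl _ (hT.iterate (n + 1) (hxC _)) _ (hxC _)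
  exact (tendsto_add_atTop_iff_nat 2).1 hreg

end Normed

section Hilbert

variable {H : Type*} [NormedAddCommGroup H] [InnerProductSpace ℝ H]

lemma convex_setOf_norm_sub_sq_le (a b : H) (c : ℝ) :
    Convex ℝ {v : H | ‖v - a‖ ^ 2 ≤ ‖v - b‖ ^ 2 + c} := by
  have hset : {v : H | ‖v - a‖ ^ 2 ≤ ‖v - b‖ ^ 2 + c}
      = {v : H | innerₛₗ ℝ (b - a) v ≤ (‖b‖ ^ 2 - ‖a‖ ^ 2 + c) / 2} := by
    ext v
    simp only [Set.mem_ofPred_eq, innerₛₗ_apply_apply, norm_sub_sq_real, inner_sub_left,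
      real_inner_comm v]
    constructor <;> intro h <;> linarith
  rw [hset]
  exact convex_halfSpace_le (innerₛₗ ℝ (b - a)).isLinear _

lemma IsNearestPoint.norm_sub_sq_le {S : Set H} {u w v : H} (hw : IsNearestPoint S u w)
    (hS : Convex ℝ S) (hv : v ∈ S) :
    ‖v - w‖ ^ 2 ≤ 2 * ‖v - u‖ ^ 2 - 2 * ‖w - u‖ ^ 2 := by
  have hmid : (2⁻¹ : ℝ) • v + (2⁻¹ : ℝ) • w ∈ S :=
    hS hv hw.1 (by norm_num) (by norm_num) (by norm_num)
  have hsum : ‖(v - u) + (w - u)‖ = 2 * ‖(2⁻¹ : ℝ) • v + (2⁻¹ : ℝ) • w - u‖ := by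
    have h2 : (v - u) + (w - u) = (2 : ℝ) • ((2⁻¹ : ℝ) • v + (2⁻¹ : ℝ) • w - u) := by module
    rw [h2, norm_smul, Real.norm_two]
  have hmin : ‖w - u‖ ≤ ‖(2⁻¹ : ℝ) • v + (2⁻¹ : ℝ) • w - u‖ := hw.2 _ hmid
  have hpar := parallelogram_law_with_norm ℝ (v - u) (w - u)
  rw [hsum, sub_sub_sub_cancel_right] at hpar
  nlinarith [norm_nonneg (w - u)]

lemma cauchySeq_of_isNearestPoint {S : ℕ → Set H} {u p : H} {x : ℕ → H} (hS : Antitone S)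
    (hconv : ∀ n, Convex ℝ (S n)) (hx : ∀ n, IsNearestPoint (S n) u (x n)) (hp : ∀ n, p ∈ S n) :
    CauchySeq x := by
  set d : ℕ → ℝ := fun n => ‖x n - u‖ ^ 2
  have hd : Monotone d := fun n m hnm =>
    pow_le_pow_left₀ (norm_nonneg _) ((hx n).2 _ (hS hnm (hx m).1)) 2
  have hbdd : BddAbove (Set.range d) :=
    ⟨‖p - u‖ ^ 2, Set.forall_mem_range.2 fun n =>
      pow_le_pow_left₀ (norm_nonneg _) ((hx n).2 p (hp n)) 2⟩
  have hlim : Tendsto d atTop (𝓝 (⨆ n, d n)) := tendsto_atTop_ciSup hd hbdd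
  refine cauchySeq_of_le_tendsto_0' (fun n => √(2 * ((⨆ n, d n) - d n))) (fun n m hnm => ?_)
    (by simpa using ((hlim.const_sub (⨆ n, d n)).const_mul 2).sqrt)
  rw [dist_comm, dist_eq_norm, ← abs_norm]
  refine Real.abs_le_sqrt ((hx n).norm_sub_sq_le (hconv n) (hS hnm (hx m).1) |>.trans ?_)
  linarith [hd hnm, le_ciSup hbdd m]

end Hilbert

theorem stmt_1_general
    {H : Type*} [NormedAddCommGroup H] [InnerProductSpace ℝ H] [CompleteSpace H]
    (C : Set H) (hCcl : IsClosed C) (hCcv : Convex ℝ C)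
    (T : H → H) (hTmaps : Set.MapsTo T C C)
    (k : ℕ → ℝ) (hk : ∀ n, 1 ≤ k n) (hklim : Tendsto k atTop (𝓝 1))
    (hAQN : ∀ n, 1 ≤ n → ∀ p ∈ C, T p = p →
      ∀ x ∈ C, ‖p - T^[n] x‖ ^ 2 ≤ k n * ‖p - x‖ ^ 2)
    (L : ℝ)
    (hLip : ∀ n, 1 ≤ n → ∀ x ∈ C, ∀ y ∈ C, ‖T^[n] x - T^[n] y‖ ≤ L * ‖x - y‖)
    (F : Set H) (hF : F = {x ∈ C | T x = x}) (hFne : F.Nonempty)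
    (ω : ℝ) (hFbdd : ∀ u ∈ F, ‖u‖ ≤ ω)
    (α : ℕ → ℝ) (hα : ∀ n, α n ∈ Set.Icc (0 : ℝ) 1) (hαlim : Tendsto α atTop (𝓝 0))
    (x : ℕ → H) (y : ℕ → H) (CS : ℕ → Set H)
    (hx0 : x 0 ∈ C) (hCS0 : CS 0 = C)
    (hy : ∀ n, y n = α n • x n + (1 - α n) • T^[n] (x n))
    (hCS : ∀ n, CS (n + 1) =
      {v ∈ CS n | ‖v - y n‖ ^ 2 ≤ ‖v - x n‖ ^ 2 + (k n - 1) * (ω + ‖x n‖) ^ 2})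
    (hproj : ∀ n, x (n + 1) ∈ CS (n + 1) ∧
      ∀ v ∈ CS (n + 1), ‖x (n + 1) - x 0‖ ≤ ‖v - x 0‖) :
    ∃ z ∈ F, (∀ v ∈ F, ‖z - x 0‖ ≤ ‖v - x 0‖) ∧ Tendsto x atTop (𝓝 z) := by
  obtain ⟨p, hp⟩ := hFne
  have hFC : ∀ q ∈ F, q ∈ C ∧ T q = q := by rw [hF]; exact fun q hq => hq
  have hAQN₀ : ∀ n, ∀ q ∈ F, ∀ u ∈ C, ‖q - T^[n] u‖ ^ 2 ≤ k n * ‖q - u‖ ^ 2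
    | 0, _, _, _, _ => le_mul_of_one_le_left (sq_nonneg _) (hk 0)
    | n + 1, q, hq, u, hu => hAQN (n + 1) n.succ_pos q (hFC q hq).1 (hFC q hq).2 u hu
  have hanti : Antitone CS := antitone_of_succ_eq_sep hCS
  have hnear : ∀ n, IsNearestPoint (CS n) (x 0) (x n)
    | 0 => ⟨hCS0 ▸ hx0, fun v _ => by simp⟩
    | n + 1 => hproj n
  have hxC : ∀ n, x n ∈ C := fun n => hCS0 ▸ hanti (Nat.zero_le n) (hnear n).1
  have hconv : ∀ n, Convex ℝ (CS n) :=
    convex_of_succ_eq_sep hCS (hCS0 ▸ hCcv) fun n => convex_setOf_norm_sub_sq_le _ _ _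
  have hFsub : ∀ n, F ⊆ CS n :=
    subset_of_succ_eq_sep hCS (hCS0 ▸ fun q hq => (hFC q hq).1) fun n q hq => by
      rw [hy n]
      exact norm_sub_convexComb_sq_le (hα n).1 (hα n).2 (hk n) (hAQN₀ n q hq (x n) (hxC n))
        (hFbdd q hq)
  obtain ⟨z, hz⟩ := cauchySeq_tendsto_of_complete
    (cauchySeq_of_isNearestPoint hanti hconv hnear fun n => hFsub n hp)
  have hzC : z ∈ C := hCcl.mem_of_tendsto hz (Eventually.of_forall hxC)
  have hstep : Tendsto (fun n => ‖x (n + 1) - x n‖) atTop (𝓝 0) := by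
    simpa using ((hz.comp (tendsto_add_atTop_nat 1)).sub hz).norm
  have he : Tendsto (fun n => (k n - 1) * (ω + ‖x n‖) ^ 2) atTop (𝓝 0) := by
    simpa using (hklim.sub_const 1).mul ((hz.norm.const_add ω).pow 2)
  have hxy : Tendsto (fun n => ‖x n - y n‖) atTop (𝓝 0) :=
    tendsto_norm_sub_of_sq_le (fun n => (hCS n ▸ (hproj n).1).2) hstep he
  have hiter : Tendsto (fun n => ‖x n - T^[n] (x n)‖) atTop (𝓝 0) :=
    tendsto_norm_sub_of_convexComb hαlim (by simpa only [hy] using hxy)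
  have hzT : T z = z := apply_eq_of_tendsto_norm_sub_apply
    (by simpa using hLip 1 le_rfl) hxC hzC hz
    (tendsto_norm_sub_apply_of_tendsto_norm_sub_iterate hTmaps hLip hxC hiter hstep)
  exact ⟨z, hF ▸ ⟨hzC, hzT⟩,
    fun v hv => IsNearestPoint.norm_sub_le_of_tendsto hnear hz fun n => hFsub n hv, hz⟩

/-- Monotone hybrid method for a single asymptotically quasi-nonexpansive mapping
in a real Hilbert space (Corollary 3.3, Hilbert-space form). -/
theorem stmt_1
    {H : Type*} [NormedAddCommGroup H] [InnerProductSpace ℝ H] [CompleteSpace H]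
    (C : Set H) (hCne : C.Nonempty) (hCcl : IsClosed C) (hCcv : Convex ℝ C)
    (T : H → H) (hTmaps : Set.MapsTo T C C)
    (k : ℕ → ℝ) (hk : ∀ n, 1 ≤ k n) (hklim : Tendsto k atTop (𝓝 1))
    (hAQN : ∀ n, 1 ≤ n → ∀ p ∈ C, T p = p →
      ∀ x ∈ C, ‖p - T^[n] x‖ ^ 2 ≤ k n * ‖p - x‖ ^ 2)
    (L : ℝ)
    (hLip : ∀ n, 1 ≤ n → ∀ x ∈ C, ∀ y ∈ C, ‖T^[n] x - T^[n] y‖ ≤ L * ‖x - y‖)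
    (F : Set H) (hF : F = {x ∈ C | T x = x}) (hFne : F.Nonempty)
    (ω : ℝ) (hω : 0 < ω) (hFbdd : ∀ u ∈ F, ‖u‖ ≤ ω)
    (α : ℕ → ℝ) (hα : ∀ n, α n ∈ Set.Icc (0 : ℝ) 1) (hαlim : Tendsto α atTop (𝓝 0))
    (x : ℕ → H) (y : ℕ → H) (CS : ℕ → Set H)
    (hx0 : x 0 ∈ C) (hCS0 : CS 0 = C)
    (hy : ∀ n, y n = α n • x n + (1 - α n) • T^[n] (x n))
    (hCS : ∀ n, CS (n + 1) =
      {v ∈ CS n | ‖v - y n‖ ^ 2 ≤ ‖v - x n‖ ^ 2 + (k n - 1) * (ω + ‖x n‖) ^ 2})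
    (hproj : ∀ n, x (n + 1) ∈ CS (n + 1) ∧
      ∀ v ∈ CS (n + 1), ‖x (n + 1) - x 0‖ ≤ ‖v - x 0‖) :
    ∃ z ∈ F, (∀ v ∈ F, ‖z - x 0‖ ≤ ‖v - x 0‖) ∧ Tendsto x atTop (𝓝 z) :=
  stmt_1_general C hCcl hCcv T hTmaps k hk hklim hAQN L hLip F hF hFne ω hFbdd α hα hαlim x y CS hx0
    hCS0 hy hCS hproj
end

section
/- Let H be a real Hilbert space and C a nonempty closed convex subset of H. Let T_1,…,T_N : C → C be closed relatively nonexpansive mappings with F = ⋂_{i=1}^N F(T_i) ≠ ∅. Let {α_n} ⊂ [0,1] with α_n → 0. Let {x_n} be generated by: x_0 ∈ C, C_0 = C; y_n^i = α_n x_n + (1 − α_n) T_i x_n for i = 1,…,N; choose i_n ∈ {1,…,N} with ‖y_n^{i_n} − x_n‖ = max_{1≤i≤N} ‖y_n^i − x_n‖ and set ȳ_n = y_n^{i_n}; C_{n+1} = {v ∈ C_n : ‖v − ȳ_n‖ ≤ ‖v − x_n‖}; and x_{n+1} is the metric projection of x_0 onto C_{n+1}. Then {x_n} converges strongly to the metric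 projection of x_0 onto F. -/
open Filter Topology

/-!
The sets `C_n` are convex, decreasing and contain `F`: `ȳ_n` is a convex combination of `x_n` and
`T_{i_n} x_n`, and neither is farther than `x_n` from a point of `F`. Since `x_n` is the projection
of `x_0` onto `C_n`, the Pythagorean inequality for projections gives
`‖x_m - x_n‖² ≤ ‖x_m - x_0‖² - ‖x_n - x_0‖²` for `n ≤ m`, and these distances increase and are
bounded by `‖p - x_0‖` for any `p ∈ F`; so `(x_n)` is Cauchy, with a limit `z`. As
`x_{n+1} ∈ C_{n+1}`, `‖ȳ_n - x_n‖ ≤ 2 ‖x_{n+1} - x_n‖ → 0`; by the maximal choice of `i_n` and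
`α_n → 0` this gives `‖T_i x_n - x_n‖ → 0` for every `i`, and closedness of `T_i` makes `z` a
common fixed point. It is the nearest point of `F` to `x_0` because every `x_n` is nearer than
any point of `F`.
-/

theorem cauchySeq_of_sq_dist_le_sub {α : Type*} [PseudoMetricSpace α] {x : ℕ → α} {b : ℕ → ℝ}
    (hb : CauchySeq b) (h : ∀ m n, m ≤ n → dist (x n) (x m) ^ 2 ≤ b n - b m) : CauchySeq x := by
  rw [Metric.cauchySeq_iff']
  intro ε hε
  obtain ⟨N, hN⟩ := Metric.cauchySeq_iff'.mp hb (ε ^ 2) (by positivity)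
  refine ⟨N, fun n hn => lt_of_pow_lt_pow_left₀ 2 hε.le ?_⟩
  calc dist (x n) (x N) ^ 2 ≤ b n - b N := h N n hn
    _ ≤ dist (b n) (b N) := le_abs_self _
    _ < ε ^ 2 := hN n hn

section NormedSpace

variable {E : Type*} [SeminormedAddCommGroup E]

theorem tendsto_norm_sub_of_norm_succ_sub_le {x w : ℕ → E} {z : E}
    (hx : Tendsto x atTop (𝓝 z)) (h : ∀ n, ‖x (n + 1) - w n‖ ≤ ‖x (n + 1) - x n‖) :
    Tendsto (fun n => ‖w n - x n‖) atTop (𝓝 0) := by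
  have hstep : Tendsto (fun n => ‖x (n + 1) - x n‖) atTop (𝓝 0) := by
    simpa using ((hx.comp (tendsto_add_atTop_nat 1)).sub hx).norm
  refine squeeze_zero (fun n => norm_nonneg _) (fun n => ?_) (by simpa using hstep.const_mul 2)
  calc ‖w n - x n‖ ≤ ‖w n - x (n + 1)‖ + ‖x (n + 1) - x n‖ :=
        norm_sub_le_norm_sub_add_norm_sub _ _ _
    _ ≤ 2 * ‖x (n + 1) - x n‖ := by rw [norm_sub_rev]; linarith [h n]

variable [NormedSpace ℝ E]

theorem norm_sub_smul_add_one_sub_smul_le {p a b : E} {t : ℝ} (ht₀ : 0 ≤ t) (ht₁ : t ≤ 1)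
    (hb : ‖p - b‖ ≤ ‖p - a‖) : ‖p - (t • a + (1 - t) • b)‖ ≤ ‖p - a‖ := by
  calc ‖p - (t • a + (1 - t) • b)‖ = ‖t • (p - a) + (1 - t) • (p - b)‖ := by congr 1; module
    _ ≤ t * ‖p - a‖ + (1 - t) * ‖p - b‖ := by
      refine (norm_add_le _ _).trans_eq ?_
      rw [norm_smul_of_nonneg ht₀, norm_smul_of_nonneg (sub_nonneg.mpr ht₁)]
    _ ≤ ‖p - a‖ := by nlinarith

theorem tendsto_norm_sub_of_tendsto_norm_smul_add_one_sub_smul_sub {α : ℕ → ℝ} {x v : ℕ → E}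
    (hα : Tendsto α atTop (𝓝 0))
    (h : Tendsto (fun n => ‖α n • x n + (1 - α n) • v n - x n‖) atTop (𝓝 0)) :
    Tendsto (fun n => ‖v n - x n‖) atTop (𝓝 0) := by
  have heq (n : ℕ) : ‖α n • x n + (1 - α n) • v n - x n‖ = |1 - α n| * ‖v n - x n‖ := by
    rw [← Real.norm_eq_abs, ← norm_smul]; congr 1; module
  have hinv : Tendsto (fun n => |1 - α n|⁻¹) atTop (𝓝 1) := by
    simpa using ((tendsto_const_nhds (x := (1 : ℝ))).sub hα).abs.inv₀ (by norm_num)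
  have hlim := hinv.mul h
  rw [mul_zero] at hlim
  refine hlim.congr' ?_
  filter_upwards [hα.eventually (gt_mem_nhds one_pos)] with n hn
  rw [heq, inv_mul_cancel_left₀ (abs_ne_zero.mpr (sub_ne_zero.mpr hn.ne'))]

end NormedSpace

section InnerProductSpace

variable {H : Type*} [NormedAddCommGroup H] [InnerProductSpace ℝ H]

theorem norm_sub_sq_add_norm_sub_sq_le_of_forall_norm_sub_le {K : Set H} (hK : Convex ℝ K)
    {x₀ z v : H} (hz : z ∈ K) (hmin : ∀ w ∈ K, ‖z - x₀‖ ≤ ‖w - x₀‖) (hv : v ∈ K) :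
    ‖v - z‖ ^ 2 + ‖z - x₀‖ ^ 2 ≤ ‖v - x₀‖ ^ 2 := by
  have hinf : ‖x₀ - z‖ = ⨅ w : K, ‖x₀ - (w : H)‖ :=
    (IsMinOn.iInf_eq (f := fun w => ‖x₀ - w‖) hz (isMinOn_iff.mpr fun w hw => by
      simpa only [norm_sub_rev x₀] using hmin w hw)).symm
  have hinner := (norm_eq_iInf_iff_real_inner_le_zero hK hz).mp hinf v hv
  have hflip : inner ℝ (v - z) (z - x₀) = -inner ℝ (x₀ - z) (v - z) := by
    rw [real_inner_comm, ← inner_neg_left, neg_sub]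
  rw [show v - x₀ = (v - z) + (z - x₀) by abel, norm_add_sq_real]
  linarith

theorem convex_setOf_norm_sub_le_norm_sub (a b : H) : Convex ℝ {v : H | ‖v - a‖ ≤ ‖v - b‖} := by
  have hset : {v : H | ‖v - a‖ ≤ ‖v - b‖} =
      innerₛₗ ℝ (b - a) ⁻¹' Set.Iic ((‖b‖ ^ 2 - ‖a‖ ^ 2) / 2) := by
    ext v
    rw [Set.mem_ofPred_eq, ← sq_le_sq₀ (norm_nonneg _) (norm_nonneg _), norm_sub_sq_real,
      norm_sub_sq_real]
    simp only [Set.mem_preimage, Set.mem_Iic, innerₛₗ_apply_apply, inner_sub_right, real_inner_comm v]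
    constructor <;> intro h <;> linarith
  rw [hset]
  exact (convex_Iic _).linear_preimage _

theorem exists_tendsto_of_antitone_of_forall_norm_sub_le [CompleteSpace H] {K : ℕ → Set H}
    (hK : Antitone K) (hconv : ∀ n, Convex ℝ (K n)) {x : ℕ → H} {x₀ : H} (hx : ∀ n, x n ∈ K n)
    (hmin : ∀ n, ∀ v ∈ K n, ‖x n - x₀‖ ≤ ‖v - x₀‖) (hne : (⋂ n, K n).Nonempty) :
    ∃ z, Tendsto x atTop (𝓝 z) ∧ ∀ v ∈ ⋂ n, K n, ‖z - x₀‖ ≤ ‖v - x₀‖ := by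
  obtain ⟨p, hp⟩ := hne
  set b : ℕ → ℝ := fun n => ‖x n - x₀‖ ^ 2
  have hbmono : Monotone b := monotone_nat_of_le_succ fun n =>
    pow_le_pow_left₀ (norm_nonneg _) (hmin n _ (hK n.le_succ (hx (n + 1)))) 2
  have hbbdd : BddAbove (Set.range b) := ⟨‖p - x₀‖ ^ 2, Set.forall_mem_range.mpr fun n =>
    pow_le_pow_left₀ (norm_nonneg _) (hmin n p (Set.mem_iInter.mp hp n)) 2⟩
  have hcauchy : CauchySeq x :=
    cauchySeq_of_sq_dist_le_sub (tendsto_atTop_ciSup hbmono hbbdd).cauchySeq fun m n hmn => by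
      have := norm_sub_sq_add_norm_sub_sq_le_of_forall_norm_sub_le (hconv m) (hx m) (hmin m)
        (hK hmn (hx n))
      rw [dist_eq_norm]
      linarith
  obtain ⟨z, hz⟩ := cauchySeq_tendsto_of_complete hcauchy
  exact ⟨z, hz, fun v hv => le_of_tendsto (hz.sub_const x₀).norm
    (Eventually.of_forall fun n => hmin n v (Set.mem_iInter.mp hv n))⟩

end InnerProductSpace

theorem stmt_5_general
    {H : Type*} [NormedAddCommGroup H] [InnerProductSpace ℝ H] [CompleteSpace H]
    (C : Set H) (hCcl : IsClosed C) (hCcv : Convex ℝ C)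
    (N : ℕ) (T : Fin N → H → H)
    (hQN : ∀ i, ∀ p ∈ C, T i p = p → ∀ x ∈ C, ‖p - T i x‖ ≤ ‖p - x‖)
    (hTclosed : ∀ i, ∀ (u : ℕ → H) (p q : H), (∀ n, u n ∈ C) → p ∈ C →
      Tendsto u atTop (𝓝 p) → Tendsto (fun n => T i (u n)) atTop (𝓝 q) → T i p = q)
    (F : Set H) (hF : F = ⋂ i, {x ∈ C | T i x = x}) (hFne : F.Nonempty)
    (α : ℕ → ℝ) (hα : ∀ n, α n ∈ Set.Icc (0 : ℝ) 1) (hαlim : Tendsto α atTop (𝓝 0))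
    (x : ℕ → H) (y : ℕ → Fin N → H) (i_ : ℕ → Fin N) (CS : ℕ → Set H)
    (hx0 : x 0 ∈ C) (hCS0 : CS 0 = C)
    (hy : ∀ n i, y n i = α n • x n + (1 - α n) • T i (x n))
    (hmax : ∀ n i, ‖y n i - x n‖ ≤ ‖y n (i_ n) - x n‖)
    (hCS : ∀ n, CS (n + 1) = {v ∈ CS n | ‖v - y n (i_ n)‖ ≤ ‖v - x n‖})
    (hproj : ∀ n, x (n + 1) ∈ CS (n + 1) ∧
      ∀ v ∈ CS (n + 1), ‖x (n + 1) - x 0‖ ≤ ‖v - x 0‖) :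
    ∃ z ∈ F, (∀ v ∈ F, ‖z - x 0‖ ≤ ‖v - x 0‖) ∧ Tendsto x atTop (𝓝 z) := by
  have hFix : ∀ p ∈ F, ∀ i, p ∈ C ∧ T i p = p := fun p hp => by
    rw [hF] at hp; exact Set.mem_iInter.mp hp
  have hanti : Antitone CS := antitone_nat_of_succ_le fun n => by
    rw [hCS n]; exact Set.sep_subset _ _
  have hxmem : ∀ n, x n ∈ CS n
    | 0 => hCS0 ▸ hx0
    | n + 1 => (hproj n).1
  have hmin : ∀ n, ∀ v ∈ CS n, ‖x n - x 0‖ ≤ ‖v - x 0‖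
    | 0, v, _ => by simp
    | n + 1, v, hv => (hproj n).2 v hv
  have hxC (n : ℕ) : x n ∈ C := hCS0 ▸ hanti (Nat.zero_le n) (hxmem n)
  have hCSF : ∀ n, Convex ℝ (CS n) ∧ F ⊆ CS n := by
    intro n
    induction n with
    -- `i_ 0` witnesses `N ≠ 0`; for `N = 0` the set `F` would be all of `H`.
    | zero => exact hCS0 ▸ ⟨hCcv, fun p hp => (hFix p hp (i_ 0)).1⟩
    | succ n ih =>
      rw [hCS n]
      refine ⟨ih.1.inter (convex_setOf_norm_sub_le_norm_sub _ _), fun p hp => ⟨ih.2 hp, ?_⟩⟩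
      obtain ⟨hpC, hpT⟩ := hFix p hp (i_ n)
      rw [hy]
      exact norm_sub_smul_add_one_sub_smul_le (hα n).1 (hα n).2 (hQN _ p hpC hpT _ (hxC n))
  have hFsub : F ⊆ ⋂ n, CS n := Set.subset_iInter fun n => (hCSF n).2
  obtain ⟨z, hz, hzmin⟩ := exists_tendsto_of_antitone_of_forall_norm_sub_le hanti
    (fun n => (hCSF n).1) hxmem hmin (hFne.mono hFsub)
  have hzC : z ∈ C := hCcl.mem_of_tendsto hz (Eventually.of_forall hxC)
  have hybar : Tendsto (fun n => ‖y n (i_ n) - x n‖) atTop (𝓝 0) :=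
    tendsto_norm_sub_of_norm_succ_sub_le hz fun n => by
      have hmem := hxmem (n + 1)
      rw [hCS n] at hmem
      exact hmem.2
  have hTz (i : Fin N) : T i z = z := by
    have hTx := tendsto_norm_sub_of_tendsto_norm_smul_add_one_sub_smul_sub hαlim
      (squeeze_zero (fun _ => norm_nonneg _) (fun n => hy n i ▸ hmax n i) hybar)
    exact hTclosed i x z z hxC hzC hz
      (by simpa using (tendsto_zero_iff_norm_tendsto_zero.mpr hTx).add hz)
  exact ⟨z, hF ▸ Set.mem_iInter.mpr fun i => ⟨hzC, hTz i⟩, fun v hv => hzmin v (hFsub hv), hz⟩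

/-- Parallel hybrid method for a finite family of closed relatively nonexpansive
mappings in a real Hilbert space (Corollary 3.9, Hilbert-space form).
Relative nonexpansiveness requires that the fixed point set coincides with the set
of asymptotic fixed points (weak limits `p` of sequences `u` in `C` with
`‖u n - T (u n)‖ → 0`); weak convergence is expressed via inner products. -/
theorem stmt_5
    {H : Type*} [NormedAddCommGroup H] [InnerProductSpace ℝ H] [CompleteSpace H]
    (C : Set H) (hCne : C.Nonempty) (hCcl : IsClosed C) (hCcv : Convex ℝ C)
    (N : ℕ) (hN : 0 < N) (T : Fin N → H → H) (hTmaps : ∀ i, Set.MapsTo (T i) C C)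
    (hQN : ∀ i, ∀ p ∈ C, T i p = p → ∀ x ∈ C, ‖p - T i x‖ ≤ ‖p - x‖)
    (hAFP : ∀ i, {p ∈ C | T i p = p} =
      {p ∈ C | ∃ u : ℕ → H, (∀ n, u n ∈ C) ∧
        (∀ w : H, Tendsto (fun n => (inner ℝ (u n) w : ℝ)) atTop (𝓝 (inner ℝ p w))) ∧
        Tendsto (fun n => ‖u n - T i (u n)‖) atTop (𝓝 0)})
    (hTclosed : ∀ i, ∀ (u : ℕ → H) (p q : H), (∀ n, u n ∈ C) → p ∈ C →
      Tendsto u atTop (𝓝 p) → Tendsto (fun n => T i (u n)) atTop (𝓝 q) → T i p = q)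
    (F : Set H) (hF : F = ⋂ i, {x ∈ C | T i x = x}) (hFne : F.Nonempty)
    (α : ℕ → ℝ) (hα : ∀ n, α n ∈ Set.Icc (0 : ℝ) 1) (hαlim : Tendsto α atTop (𝓝 0))
    (x : ℕ → H) (y : ℕ → Fin N → H) (i_ : ℕ → Fin N) (CS : ℕ → Set H)
    (hx0 : x 0 ∈ C) (hCS0 : CS 0 = C)
    (hy : ∀ n i, y n i = α n • x n + (1 - α n) • T i (x n))
    (hmax : ∀ n i, ‖y n i - x n‖ ≤ ‖y n (i_ n) - x n‖)
    (hCS : ∀ n, CS (n + 1) = {v ∈ CS n | ‖v - y n (i_ n)‖ ≤ ‖v - x n‖})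
    (hproj : ∀ n, x (n + 1) ∈ CS (n + 1) ∧
      ∀ v ∈ CS (n + 1), ‖x (n + 1) - x 0‖ ≤ ‖v - x 0‖) :
    ∃ z ∈ F, (∀ v ∈ F, ‖z - x 0‖ ≤ ‖v - x 0‖) ∧ Tendsto x atTop (𝓝 z) :=
  stmt_5_general C hCcl hCcv N T hQN hTclosed F hF hFne α hα hαlim x y i_ CS hx0 hCS0 hy hmax hCS
    hproj
end
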